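/- For positive integers n, k with 0 ≤ k ≤ n, the number of lattice points x ∈ ℕ^n with x_i ≤ 1 for i ≤ k and x_1 + ⋯ + x_n ≤ n equals ∑_{j=0}^{k} (-1)^j C(k,j) C(2n − 2j, n). -/
import Mathlib


open Finset

/-- Stars and bars: the number of `d`-tuples of naturals summing to `m`. -/
lemma sb_eq (d m : ℕ) :
    Nat.card {x : Fin d → ℕ // ∑ i, x i = m} = (d + m - 1).choose m := by
  rw [← Nat.card_congr (Sym.equivNatSumOfFintype (Fin d) m), Nat.card_eq_fintype_card,
    Sym.card_sym_eq_choose, Fintype.card_fin]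

/-- Stars and bars, inequality version. -/
lemma sb_le (d m : ℕ) :
    Nat.card {x : Fin d → ℕ // ∑ i, x i ≤ m} = (m + d).choose d := by
  have e : {x : Fin d → ℕ // ∑ i, x i ≤ m} ≃ {y : Fin (d + 1) → ℕ // ∑ i, y i = m} :=
    { toFun := fun x => ⟨Fin.cons (m - ∑ i, x.1 i) x.1, by
        rw [Fin.sum_cons]; have := x.2; omega⟩
      invFun := fun y => ⟨fun i => y.1 i.succ, by
        show ∑ i : Fin d, y.1 i.succ ≤ m
        have := y.2; rw [Fin.sum_univ_succ] at this; omega⟩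
      left_inv := fun x => Subtype.ext (funext fun i => by simp)
      right_inv := fun y => Subtype.ext (funext fun i => by
        refine Fin.cases ?_ (fun j => ?_) i
        · have := y.2; rw [Fin.sum_univ_succ] at this
          simp only [Fin.cons_zero]; omega
        · simp) }
  rw [Nat.card_congr e, sb_eq]
  have h1 : d + 1 + m - 1 = m + d := by omega
  rw [h1, Nat.choose_symm (Nat.le_add_right m d) |>.symm]
  congr 1
  omega

lemma count_ge (N m : ℕ) (t : Finset (Fin N)) (hm : 2 * #t ≤ m) :
    Nat.card {x : Fin N → ℕ // (∀ i ∈ t, 2 ≤ x i) ∧ ∑ i, x i ≤ m} =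
      (m - 2 * #t + N).choose N := by
  have key : ∑ i : Fin N, (if i ∈ t then 2 else 0) = 2 * #t := by
    rw [Finset.sum_ite_mem, Finset.univ_inter, Finset.sum_const, smul_eq_mul]; ring
  have e : {y : Fin N → ℕ // ∑ i, y i ≤ m - 2 * #t} ≃
      {x : Fin N → ℕ // (∀ i ∈ t, 2 ≤ x i) ∧ ∑ i, x i ≤ m} :=
    { toFun := fun y => ⟨fun i => y.1 i + if i ∈ t then 2 else 0,
        fun i hi => by simp [hi], by
          show ∑ i : Fin N, (y.1 i + if i ∈ t then 2 else 0) ≤ m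
          rw [Finset.sum_add_distrib, key]; have := y.2; omega⟩
      invFun := fun x => ⟨fun i => x.1 i - (if i ∈ t then 2 else 0), by
        show ∑ i : Fin N, (x.1 i - (if i ∈ t then 2 else 0)) ≤ m - 2 * #t
        have h1 : ∀ i, (if i ∈ t then 2 else 0) ≤ x.1 i := by
          intro i; split_ifs with h
          · exact x.2.1 i h
          · exact Nat.zero_le _
        have h2 : ∑ i, (x.1 i - (if i ∈ t then 2 else 0)) +
            ∑ i : Fin N, (if i ∈ t then 2 else 0) = ∑ i, x.1 i := by
          rw [← Finset.sum_add_distrib]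
          exact Finset.sum_congr rfl fun i _ => by have := h1 i; omega
        have h3 := x.2.2
        omega⟩
      left_inv := fun y => Subtype.ext (funext fun i => by
        show y.1 i + (if i ∈ t then 2 else 0) - (if i ∈ t then 2 else 0) = y.1 i
        omega)
      right_inv := fun x => Subtype.ext (funext fun i => by
        show x.1 i - (if i ∈ t then 2 else 0) + (if i ∈ t then 2 else 0) = x.1 i
        have h1 : (if i ∈ t then 2 else 0) ≤ x.1 i := by
          split_ifs with h
          · exact x.2.1 i h
          · exact Nat.zero_le _
        omega) }
  rw [← Nat.card_congr e, sb_le]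

lemma count_ge_zero (N m : ℕ) (t : Finset (Fin N)) (hm : m < 2 * #t) :
    Nat.card {x : Fin N → ℕ // (∀ i ∈ t, 2 ≤ x i) ∧ ∑ i, x i ≤ m} = 0 := by
  have : IsEmpty {x : Fin N → ℕ // (∀ i ∈ t, 2 ≤ x i) ∧ ∑ i, x i ≤ m} := by
    refine ⟨fun x => ?_⟩
    obtain ⟨x, hx1, hx2⟩ := x
    have h1 : 2 * #t ≤ ∑ i, x i := by
      calc 2 * #t = ∑ _i ∈ t, 2 := by rw [Finset.sum_const, smul_eq_mul]; ring
        _ ≤ ∑ i ∈ t, x i := Finset.sum_le_sum hx1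
        _ ≤ ∑ i, x i := Finset.sum_le_sum_of_subset (Finset.subset_univ t)
    omega
  exact Nat.card_of_isEmpty

lemma card_filter_eq (n : ℕ) (q : (Fin n → ℕ) → Prop) [DecidablePred q] :
    #(Finset.univ.filter
        (fun a : {x : Fin n → Fin (n + 1) // ∑ i, (x i : ℕ) ≤ n} =>
          q (fun i => (a.1 i : ℕ)))) =
      Nat.card {x : Fin n → ℕ // q x ∧ ∑ i, x i ≤ n} := by
  rw [← Fintype.card_subtype, ← Nat.card_eq_fintype_card]
  refine Nat.card_congr
    { toFun := fun a => ⟨fun i => (a.1.1 i : ℕ), a.2, a.1.2⟩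
      invFun := fun x => ⟨⟨fun i => ⟨x.1 i, by
        have h := Finset.single_le_sum (f := x.1) (fun i _ => Nat.zero_le _)
          (Finset.mem_univ i)
        have := x.2.2; omega⟩, by simpa using x.2.2⟩, x.2.1⟩
      left_inv := fun a => Subtype.ext (Subtype.ext (funext fun i => Fin.ext rfl))
      right_inv := fun x => Subtype.ext rfl }

theorem stmt_19 (n k : ℕ) (hn : 0 < n) (hk : k ≤ n) :
    (∑ j ∈ Finset.range (k + 1),
        (-1) ^ j * (k.choose j : ℤ) * ((2 * (n - j)).choose n : ℤ)) =
      ({x : Fin n → ℕ |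
        (∀ i : Fin n, (i : ℕ) < k → x i ≤ 1) ∧ ∑ i, x i ≤ n}.ncard : ℤ) := by
  set S : Fin n → Finset {x : Fin n → Fin (n + 1) // ∑ i, (x i : ℕ) ≤ n} :=
    fun i => Finset.univ.filter (fun a => 2 ≤ (a.1 i : ℕ)) with hS
  set s : Finset (Fin n) := Finset.univ.filter (fun i => (i : ℕ) < k) with hs
  have hscard : #s = k := by
    have hseq : s = Finset.attachFin (Finset.range k)
        (fun m hm => lt_of_lt_of_le (Finset.mem_range.1 hm) hk) := by
      ext a; simp [hs, Finset.mem_attachFin]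
    rw [hseq, Finset.card_attachFin, Finset.card_range]
  have hinfcard : ∀ t : Finset (Fin n), (#(t.inf S) : ℤ) = ((2 * (n - #t)).choose n : ℤ) := by
    intro t
    have htn : #t ≤ n := by
      simpa using Finset.card_le_card (Finset.subset_univ t)
    have hinf : t.inf S = Finset.univ.filter
        (fun a : {x : Fin n → Fin (n + 1) // ∑ i, (x i : ℕ) ≤ n} =>
          ∀ i ∈ t, 2 ≤ (a.1 i : ℕ)) := by
      ext a
      simp only [Finset.mem_inf, Finset.mem_filter, Finset.mem_univ, true_and, hS]
    rw [hinf, card_filter_eq n (fun x => ∀ i ∈ t, 2 ≤ x i)]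
    rcases le_or_gt (2 * #t) n with h | h
    · rw [count_ge n n t h]
      have h2 : n - 2 * #t + n = 2 * (n - #t) := by omega
      rw [h2]
    · rw [count_ge_zero n n t h, Nat.choose_eq_zero_of_lt (show 2 * (n - #t) < n by omega)]
  have hmain : s.inf (fun i => (S i)ᶜ) = Finset.univ.filter
      (fun a : {x : Fin n → Fin (n + 1) // ∑ i, (x i : ℕ) ≤ n} =>
        ∀ i : Fin n, (i : ℕ) < k → (a.1 i : ℕ) ≤ 1) := by
    ext a
    simp only [Finset.mem_inf, Finset.mem_compl, Finset.mem_filter, Finset.mem_univ,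
      true_and, hS, hs]
    constructor
    · intro h i hi
      have := h i (by simpa using hi)
      omega
    · intro h i hi
      have hi' : (i : ℕ) < k := by simpa using hi
      have := h i hi'
      omega
  have hset : ({x : Fin n → ℕ |
        (∀ i : Fin n, (i : ℕ) < k → x i ≤ 1) ∧ ∑ i, x i ≤ n}.ncard : ℤ) =
      (Nat.card {x : Fin n → ℕ //
        (∀ i : Fin n, (i : ℕ) < k → x i ≤ 1) ∧ ∑ i, x i ≤ n} : ℤ) := by
    congr 1
  have key := Finset.inclusion_exclusion_card_inf_compl s S
  rw [hmain] at key
  rw [hset, ← card_filter_eq n (fun x => ∀ i : Fin n, (i : ℕ) < k → x i ≤ 1), key,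
    Finset.sum_powerset, hscard]
  refine Finset.sum_congr rfl fun j hj => ?_
  symm
  calc ∑ t ∈ Finset.powersetCard j s, ((-1 : ℤ) ^ #t * #(t.inf S))
      = ∑ _t ∈ Finset.powersetCard j s, ((-1 : ℤ) ^ j * ((2 * (n - j)).choose n : ℤ)) := by
        refine Finset.sum_congr rfl fun t ht => ?_
        obtain ⟨hts, htc⟩ := Finset.mem_powersetCard.1 ht
        rw [hinfcard t, htc]
    _ = (-1) ^ j * (k.choose j : ℤ) * ((2 * (n - j)).choose n : ℤ) := by
        rw [Finset.sum_const, Finset.card_powersetCard, hscard, nsmul_eq_mul]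
        push_cast
        ring
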